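/- The trigonometric polynomial f₃(α,β,γ) = |−exp(iα) + exp(i(β+γ))|² = 2 − 2·cos(−α+β+γ) is extremal in Q(1,1,1): whenever f₃ = g + h with g, h ∈ Q(1,1,1), there exists a real constant c ≥ 0 with g = c·f₃. -/
import Mathlib

open Complex ComplexOrder

noncomputable section

/-- The lattice box `S(1,1,1) = {0,1}³`. -/
def Sbox (N₁ N₂ N₃ : ℕ) : Finset (ℤ × ℤ × ℤ) :=
  Finset.Icc (0, 0, 0) ((N₁ : ℤ), (N₂ : ℤ), (N₃ : ℤ))

/-- The character `exp(i(kα + ℓβ + mγ))`. -/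
def eChar (δ : ℤ × ℤ × ℤ) (v : ℝ × ℝ × ℝ) : ℂ :=
  Complex.exp (Complex.I *
    ((δ.1 : ℂ) * (v.1 : ℂ) + (δ.2.1 : ℂ) * (v.2.1 : ℂ) + (δ.2.2 : ℂ) * (v.2.2 : ℂ)))

/-- `Q(N₁,N₂,N₃)`: finite sums of squared moduli of trig polynomials with frequencies in `S`. -/
def QSet (N₁ N₂ N₃ : ℕ) : Set ((ℝ × ℝ × ℝ) → ℂ) :=
  { f | ∃ (r : ℕ) (q : Fin r → (ℤ × ℤ × ℤ) → ℂ),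
      f = fun v => ∑ j, (‖∑ p ∈ Sbox N₁ N₂ N₃, q j p * eChar p v‖ : ℂ) ^ 2 }

/- ## Auxiliary lemmas -/

lemma sum_Sbox111 (q : (ℤ × ℤ × ℤ) → ℂ) : ∑ p ∈ Sbox 1 1 1, q p =
    q (0,0,0) + q (0,0,1) + q (0,1,0) + q (0,1,1) + q (1,0,0) + q (1,0,1) + q (1,1,0) + q (1,1,1) := by
  have h : Sbox 1 1 1 = {(0,0,0),(0,0,1),(0,1,0),(0,1,1),(1,0,0),(1,0,1),(1,1,0),(1,1,1)} := by decide
  rw [h, show ((0,0,0) : ℤ×ℤ×ℤ) = 0 from rfl]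
  simp (config := { decide := true }) [Finset.sum_insert]
  ring

lemma ech000 (v : ℝ × ℝ × ℝ) : eChar (0,0,0) v = 1 := by
  simp only [eChar]; push_cast; simp

lemma ech001 (v : ℝ × ℝ × ℝ) : eChar (0,0,1) v = exp (I*(v.2.2:ℂ)) := by
  simp only [eChar]; congr 1; push_cast; ring

lemma ech010 (v : ℝ × ℝ × ℝ) : eChar (0,1,0) v = exp (I*(v.2.1:ℂ)) := by
  simp only [eChar]; congr 1; push_cast; ring

lemma ech011 (v : ℝ × ℝ × ℝ) : eChar (0,1,1) v = exp (I*(v.2.1:ℂ)) * exp (I*(v.2.2:ℂ)) := by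
  rw [← Complex.exp_add]; simp only [eChar]; congr 1; push_cast; ring

lemma ech100 (v : ℝ × ℝ × ℝ) : eChar (1,0,0) v = exp (I*(v.1:ℂ)) := by
  simp only [eChar]; congr 1; push_cast; ring

lemma ech101 (v : ℝ × ℝ × ℝ) : eChar (1,0,1) v = exp (I*(v.1:ℂ)) * exp (I*(v.2.2:ℂ)) := by
  rw [← Complex.exp_add]; simp only [eChar]; congr 1; push_cast; ring

lemma ech110 (v : ℝ × ℝ × ℝ) : eChar (1,1,0) v = exp (I*(v.1:ℂ)) * exp (I*(v.2.1:ℂ)) := by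
  rw [← Complex.exp_add]; simp only [eChar]; congr 1; push_cast; ring

lemma ech111 (v : ℝ × ℝ × ℝ) :
    eChar (1,1,1) v = exp (I*(v.1:ℂ)) * exp (I*(v.2.1:ℂ)) * exp (I*(v.2.2:ℂ)) := by
  rw [← Complex.exp_add, ← Complex.exp_add]; simp only [eChar]; congr 1; push_cast; ring

lemma expI0 : exp (I*((0:ℝ):ℂ)) = 1 := by simp

lemma expIpi : exp (I*((Real.pi:ℝ):ℂ)) = -1 := by rw [mul_comm]; exact Complex.exp_pi_mul_I

lemma expIpi2 : exp (I*((Real.pi/2:ℝ):ℂ)) = I := by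
  rw [mul_comm, Complex.exp_mul_I]
  push_cast
  rw [Complex.cos_pi_div_two, Complex.sin_pi_div_two]
  ring

lemma exp_split (β γ : ℝ) : exp (I*((β+γ:ℝ):ℂ)) = exp (I*(β:ℂ)) * exp (I*(γ:ℂ)) := by
  rw [← Complex.exp_add]; congr 1; push_cast; ring

/-- The key linear-algebra lemma: if the trig polynomial (restricted to the diagonal
`α = β + γ`) vanishes at the nine test points, all seven coefficients vanish. -/
lemma coeffs_zero (A B C D E G H : ℂ)
    (hall : ∀ z w : ℂ, (z = 1 ∨ z = -1 ∨ z = I) → (w = 1 ∨ w = -1 ∨ w = I) →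
      A + B*z + C*w + D*(z*w) + E*(z*w^2) + G*(z^2*w) + H*(z^2*w^2) = 0) :
    A = 0 ∧ B = 0 ∧ C = 0 ∧ D = 0 ∧ E = 0 ∧ G = 0 ∧ H = 0 := by
  have e1 := hall 1 1 (Or.inl rfl) (Or.inl rfl)
  have e2 := hall 1 (-1) (Or.inl rfl) (Or.inr (Or.inl rfl))
  have e3 := hall 1 I (Or.inl rfl) (Or.inr (Or.inr rfl))
  have e4 := hall (-1) 1 (Or.inr (Or.inl rfl)) (Or.inl rfl)
  have e5 := hall (-1) (-1) (Or.inr (Or.inl rfl)) (Or.inr (Or.inl rfl))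
  have e6 := hall (-1) I (Or.inr (Or.inl rfl)) (Or.inr (Or.inr rfl))
  have e7 := hall I 1 (Or.inr (Or.inr rfl)) (Or.inl rfl)
  have hI : (I:ℂ) * I = -1 := Complex.I_mul_I
  refine ⟨?_, ?_, ?_, ?_, ?_, ?_, ?_⟩
  · linear_combination ((1-I)/8)*e1 + ((1+I)/8)*e2 + (1/4 : ℂ)*e3 + ((1-I)/8)*e4
      + ((1+I)/8)*e5 + (1/4 : ℂ)*e6 + (-H/2)*hI
  · linear_combination ((1-I)/8)*e1 + ((1+I)/8)*e2 + (1/4 : ℂ)*e3 + ((-1+I)/8)*e4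
      + ((-1-I)/8)*e5 + (-1/4 : ℂ)*e6 + (-E/2)*hI
  · linear_combination ((1-I)/8)*e1 + ((-1-I)/8)*e2 + (-1/4 : ℂ)*e3 + ((1+3*I)/8)*e4
      + ((-1-I)/8)*e5 + (-1/4 : ℂ)*e6 + (1/2 : ℂ)*e7 + (-G/2)*hI
  · linear_combination (1/4 : ℂ)*e1 + (-1/4 : ℂ)*e2 + (-1/4 : ℂ)*e4 + (1/4 : ℂ)*e5
  · linear_combination ((1+I)/8)*e1 + ((1-I)/8)*e2 + (-1/4 : ℂ)*e3 + ((-1-I)/8)*e4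
      + ((-1+I)/8)*e5 + (1/4 : ℂ)*e6 + (E/2)*hI
  · linear_combination ((1+I)/8)*e1 + ((-1+I)/8)*e2 + (1/4 : ℂ)*e3 + ((1-3*I)/8)*e4
      + ((-1+I)/8)*e5 + (1/4 : ℂ)*e6 + (-1/2 : ℂ)*e7 + (G/2)*hI
  · linear_combination ((1+I)/8)*e1 + ((1-I)/8)*e2 + (-1/4 : ℂ)*e3 + ((1+I)/8)*e4
      + ((1-I)/8)*e5 + (-1/4 : ℂ)*e6 + (H/2)*hI

/-- Proposition 3: the trigonometric polynomial f₃(α,β,γ) = |−e^{iα} + e^{i(β+γ)}|² = 2 − 2cos(−α+β+γ)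
is extremal in `Q(1,1,1)`. -/
theorem extremal_f3 (f₃ : ℝ × ℝ × ℝ → ℂ)
    (hf : f₃ = fun v => (‖-Complex.exp (Complex.I * (v.1 : ℂ)) + Complex.exp (Complex.I * ((v.2.1 : ℂ) + (v.2.2 : ℂ)))‖ : ℂ) ^ 2) :
    ∀ g h : (ℝ × ℝ × ℝ) → ℂ, g ∈ QSet 1 1 1 → h ∈ QSet 1 1 1 → f₃ = g + h →
      ∃ c : ℝ, 0 ≤ c ∧ g = fun v => (c : ℂ) * f₃ v := by
  intro g h hg hh heq
  obtain ⟨r, q, rfl⟩ := hg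
  obtain ⟨s, t, rfl⟩ := hh
  subst hf
  -- Step 1: the polynomials of g vanish on the diagonal α = β + γ
  have key : ∀ (β γ : ℝ) (j : Fin r),
      (∑ p ∈ Sbox 1 1 1, q j p * eChar p (β+γ, β, γ)) = 0 := by
    intro β γ j
    have hv := congrFun heq (β+γ, β, γ)
    simp only [Pi.add_apply] at hv
    have hL : -exp (I * (((β+γ : ℝ)) : ℂ)) + exp (I * ((β:ℂ) + (γ:ℂ))) = 0 := by
      rw [show (((β+γ:ℝ)):ℂ) = (β:ℂ) + (γ:ℂ) from by push_cast; ring]; ring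
    rw [hL] at hv
    simp only [norm_zero, Complex.ofReal_zero] at hv
    rw [show ((0:ℂ)^2) = 0 from by ring] at hv
    have hvr : (0:ℝ) = (∑ j : Fin r, ‖∑ p ∈ Sbox 1 1 1, q j p * eChar p (β+γ, β, γ)‖^2)
        + (∑ j : Fin s, ‖∑ p ∈ Sbox 1 1 1, t j p * eChar p (β+γ, β, γ)‖^2) := by
      exact_mod_cast hv
    have h1 : (0:ℝ) ≤ ∑ j : Fin r, ‖∑ p ∈ Sbox 1 1 1, q j p * eChar p (β+γ, β, γ)‖^2 := by
      positivity
    have h2 : (0:ℝ) ≤ ∑ j : Fin s, ‖∑ p ∈ Sbox 1 1 1, t j p * eChar p (β+γ, β, γ)‖^2 := by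
      positivity
    have hS : ∑ j : Fin r, ‖∑ p ∈ Sbox 1 1 1, q j p * eChar p (β+γ, β, γ)‖^2 = 0 := by
      linarith
    have := (Finset.sum_eq_zero_iff_of_nonneg (fun i _ => by positivity)).1 hS j
      (Finset.mem_univ j)
    have hnorm : ‖∑ p ∈ Sbox 1 1 1, q j p * eChar p (β+γ, β, γ)‖ = 0 := by
      nlinarith [norm_nonneg (∑ p ∈ Sbox 1 1 1, q j p * eChar p (β+γ, β, γ))]
    exact norm_eq_zero.1 hnorm
  -- Step 2: expand to polynomial form in z = e^{iβ}, w = e^{iγ}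
  have expand : ∀ (j : Fin r) (β γ : ℝ),
      q j (0,0,0) + q j (0,1,0) * exp (I*(β:ℂ)) + q j (0,0,1) * exp (I*(γ:ℂ))
      + (q j (0,1,1) + q j (1,0,0)) * (exp (I*(β:ℂ)) * exp (I*(γ:ℂ)))
      + q j (1,0,1) * (exp (I*(β:ℂ)) * exp (I*(γ:ℂ))^2)
      + q j (1,1,0) * (exp (I*(β:ℂ))^2 * exp (I*(γ:ℂ)))
      + q j (1,1,1) * (exp (I*(β:ℂ))^2 * exp (I*(γ:ℂ))^2) = 0 := by
    intro j β γ
    have hk := key β γ j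
    rw [sum_Sbox111] at hk
    rw [ech000, ech001, ech010, ech011, ech100, ech101, ech110, ech111] at hk
    simp only [exp_split] at hk
    linear_combination hk
  -- Step 3: conclude the coefficient relations for each j
  have hco : ∀ j : Fin r, q j (0,0,0) = 0 ∧ q j (0,1,0) = 0 ∧ q j (0,0,1) = 0
      ∧ (q j (0,1,1) + q j (1,0,0)) = 0 ∧ q j (1,0,1) = 0 ∧ q j (1,1,0) = 0
      ∧ q j (1,1,1) = 0 := by
    intro j
    apply coeffs_zero
    rintro z w (rfl | rfl | rfl) (rfl | rfl | rfl)
    · have e := expand j 0 0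
      rw [expI0] at e
      linear_combination e
    · have e := expand j 0 Real.pi
      rw [expI0, expIpi] at e
      linear_combination e
    · have e := expand j 0 (Real.pi/2)
      rw [expI0, expIpi2] at e
      linear_combination e
    · have e := expand j Real.pi 0
      rw [expIpi, expI0] at e
      linear_combination e
    · have e := expand j Real.pi Real.pi
      rw [expIpi] at e
      linear_combination e
    · have e := expand j Real.pi (Real.pi/2)
      rw [expIpi, expIpi2] at e
      linear_combination e
    · have e := expand j (Real.pi/2) 0
      rw [expIpi2, expI0] at e
      linear_combination e
    · have e := expand j (Real.pi/2) Real.pi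
      rw [expIpi2, expIpi] at e
      linear_combination e
    · have e := expand j (Real.pi/2) (Real.pi/2)
      rw [expIpi2] at e
      linear_combination e
  -- Step 4: assemble
  refine ⟨∑ j : Fin r, ‖q j (1,0,0)‖^2, by positivity, ?_⟩
  funext v
  have hsum : ∀ j : Fin r, (∑ p ∈ Sbox 1 1 1, q j p * eChar p v)
      = -(q j (1,0,0)) * (-exp (I * (v.1:ℂ)) + exp (I * ((v.2.1:ℂ) + (v.2.2:ℂ)))) := by
    intro j
    obtain ⟨hA, hB, hC, hD, hE, hG, hH⟩ := hco j
    rw [sum_Sbox111, ech000, ech001, ech010, ech011, ech100, ech101, ech110, ech111,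
      show I * ((v.2.1:ℂ) + (v.2.2:ℂ)) = I * (v.2.1:ℂ) + I * (v.2.2:ℂ) from by ring,
      Complex.exp_add]
    linear_combination hA + exp (I*(v.2.2:ℂ)) * hC + exp (I*(v.2.1:ℂ)) * hB
      + (exp (I*(v.2.1:ℂ)) * exp (I*(v.2.2:ℂ))) * hD
      + (exp (I*(v.1:ℂ)) * exp (I*(v.2.2:ℂ))) * hE
      + (exp (I*(v.1:ℂ)) * exp (I*(v.2.1:ℂ))) * hG
      + (exp (I*(v.1:ℂ)) * exp (I*(v.2.1:ℂ)) * exp (I*(v.2.2:ℂ))) * hH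
  have hterm : ∀ j : Fin r, (‖∑ p ∈ Sbox 1 1 1, q j p * eChar p v‖ : ℂ)^2
      = ((‖q j (1,0,0)‖^2 : ℝ) : ℂ)
        * (‖-exp (I * (v.1:ℂ)) + exp (I * ((v.2.1:ℂ) + (v.2.2:ℂ)))‖ : ℂ)^2 := by
    intro j
    rw [hsum j, norm_mul, norm_neg]
    push_cast
    ring
  simp only [hterm]
  rw [← Finset.sum_mul]
  congr 1
  push_cast
  ring
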